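/- arXiv:0811.2042 — 2 statements merged into one kernel-verified Lean document; each statement's English description precedes it below -/
import Mathlib

section
/- (Quasi-Eulerian irreducibility) If (A,v,v) ∈ ℛ and u is a neighbor of v, then (A,v,v) ↔ (A △ uv, u, v), where △ denotes symmetric difference. -/
attribute [local instance] Classical.propDecidable

namespace FPL

/-- Vertices of the brick-wall honeycomb lattice with periodic boundary conditions. -/
abbrev Vtx (m n : ℕ) := ZMod m × ZMod n

/-- Adjacency on the brick-wall honeycomb lattice: horizontal edges between `(i,j)` and
`(i+1,j)`, and vertical edges between `(i,j)` and `(i,j+1)` whenever `i+j` is even. -/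
def HoneyAdj (m n : ℕ) (x y : Vtx m n) : Prop :=
  (x.2 = y.2 ∧ (y.1 = x.1 + 1 ∨ x.1 = y.1 + 1)) ∨
  (x.1 = y.1 ∧ ((y.2 = x.2 + 1 ∧ Even (x.1.val + x.2.val)) ∨
                (x.2 = y.2 + 1 ∧ Even (y.1.val + y.2.val))))

variable (m n : ℕ) [NeZero m] [NeZero n]

/-- The edge set of the brick-wall honeycomb lattice. -/
noncomputable def honeyEdges : Finset (Sym2 (Vtx m n)) :=
  Finset.image (fun p : Vtx m n × Vtx m n => s(p.1, p.2))
    (Finset.univ.filter fun p => HoneyAdj m n p.1 p.2)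

/-- `bdeg m n A x` is the degree of the vertex `x` in the spanning subgraph `(V, A)`. -/
noncomputable def bdeg (A : Finset (Sym2 (Vtx m n))) (x : Vtx m n) : ℕ :=
  (A.filter fun e => x ∈ e).card

/-- `(A,u,v)` is a state of the worm chain: `A ⊆ E`, and the set of odd-degree vertices of
`(V,A)` is `{u,v}` if `u ≠ v`, and is empty if `u = v`. -/
def IsWormState (A : Finset (Sym2 (Vtx m n))) (u v : Vtx m n) : Prop :=
  A ⊆ honeyEdges m n ∧ ∀ x, (Odd (bdeg m n A x) ↔ ((x = u ∨ x = v) ∧ u ≠ v))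

/-- The worm state space `𝒮`. -/
abbrev WormState := {p : Finset (Sym2 (Vtx m n)) × Vtx m n × Vtx m n //
  IsWormState m n p.1 p.2.1 p.2.2}

/-- The set `ℛ` of states with no isolated vertices. -/
def FullSupport (st : WormState m n) : Prop := ∀ x : Vtx m n, bdeg m n st.1.1 x ≠ 0

/-- The fully-packed worm transition matrix `P'_∞`. -/
noncomputable def Pinf : Matrix (WormState m n) (WormState m n) ℝ := fun st tt =>
  if st.1.2.1 = st.1.2.2 then
    (if tt = st then (bdeg m n st.1.1 st.1.2.2 : ℝ) / 3 else 0) +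
    (if ∃ v' : Vtx m n, HoneyAdj m n st.1.2.2 v' ∧ s(st.1.2.2, v') ∉ st.1.1 ∧
        tt.1.1 = insert s(st.1.2.2, v') st.1.1 ∧
        ((tt.1.2.1 = v' ∧ tt.1.2.2 = st.1.2.2) ∨ (tt.1.2.1 = st.1.2.2 ∧ tt.1.2.2 = v'))
      then 1/6 else 0)
  else
    (if bdeg m n st.1.1 st.1.2.1 = 3 ∧ ∃ u' : Vtx m n, HoneyAdj m n st.1.2.1 u' ∧
        s(st.1.2.1, u') ∈ st.1.1 ∧ tt.1.1 = st.1.1.erase s(st.1.2.1, u') ∧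
        tt.1.2.1 = u' ∧ tt.1.2.2 = st.1.2.2 then 1/6 else 0) +
    (if bdeg m n st.1.1 st.1.2.1 = 1 ∧ ∃ u' : Vtx m n, HoneyAdj m n st.1.2.1 u' ∧
        s(st.1.2.1, u') ∉ st.1.1 ∧ tt.1.1 = insert s(st.1.2.1, u') st.1.1 ∧
        tt.1.2.1 = u' ∧ tt.1.2.2 = st.1.2.2 then 1/4 else 0) +
    (if bdeg m n st.1.1 st.1.2.2 = 3 ∧ ∃ v' : Vtx m n, HoneyAdj m n st.1.2.2 v' ∧
        s(st.1.2.2, v') ∈ st.1.1 ∧ tt.1.1 = st.1.1.erase s(st.1.2.2, v') ∧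
        tt.1.2.1 = st.1.2.1 ∧ tt.1.2.2 = v' then 1/6 else 0) +
    (if bdeg m n st.1.1 st.1.2.2 = 1 ∧ ∃ v' : Vtx m n, HoneyAdj m n st.1.2.2 v' ∧
        s(st.1.2.2, v') ∉ st.1.1 ∧ tt.1.1 = insert s(st.1.2.2, v') st.1.1 ∧
        tt.1.2.1 = st.1.2.1 ∧ tt.1.2.2 = v' then 1/4 else 0)

/-- `st → tt`: some power of `P'_∞` has positive `(st,tt)` entry. -/
def Reaches (st tt : WormState m n) : Prop := ∃ k : ℕ, 0 < (Pinf m n ^ k) st tt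

/-- `st ↔ tt`: mutual reachability. -/
def Comm (st tt : WormState m n) : Prop := Reaches m n st tt ∧ Reaches m n tt st

/-- The fully-packed configuration consisting of all horizontal edges. -/
noncomputable def Hconfig : Finset (Sym2 (Vtx m n)) :=
  Finset.image (fun p : Vtx m n => s(p, (p.1 + 1, p.2))) Finset.univ

end FPL

/-!
In a state `(A,v,v)` of `ℛ` every degree is even, nonzero and at most `3`, hence `2`.
If `uv ∉ A`, the worm opens along `uv` and closes again by removing it at `u` (degree `3`).
If `uv ∈ A`, some edge `vw` is missing at `v`; the worm opens along `vw`, its defect at `v`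
(now of degree `3`) retracts along `vu`, and its defect at `w` (degree `3`) retracts along `wv`,
leaving `(A ∖ uv, u, v)`; re-adding `uv` at `u` (degree `1`) closes it again.
-/

namespace FPL

variable {m n : ℕ}

lemma natCast_ne_zero_of_lt {k c : ℕ} (hc : 0 < c) (hck : c < k) : (c : ZMod k) ≠ 0 := by
  rw [ne_eq, ZMod.natCast_eq_zero_iff]
  exact fun h => absurd (Nat.le_of_dvd hc h) (by omega)

lemma add_one_ne_self {k : ℕ} (hk : 2 ≤ k) (a : ZMod k) : a + 1 ≠ a := by
  simpa using natCast_ne_zero_of_lt (k := k) one_pos hk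

lemma sub_one_ne_self {k : ℕ} (hk : 2 ≤ k) (a : ZMod k) : a - 1 ≠ a := by
  simpa [sub_eq_self] using natCast_ne_zero_of_lt (k := k) one_pos hk

lemma add_one_ne_sub_one {k : ℕ} (hk : 3 ≤ k) (a : ZMod k) : a + 1 ≠ a - 1 := by
  intro h
  exact natCast_ne_zero_of_lt (k := k) two_pos hk (by push_cast; linear_combination h)

lemma even_val_add_val_add_one {k k' : ℕ} [NeZero k] (hk : Even k) (a : ZMod k')
    (b : ZMod k) : Even (a.val + (b + 1).val) ↔ ¬Even (a.val + b.val) := by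
  have h1 : 1 % k = 1 := Nat.mod_eq_of_lt (by obtain ⟨c, hc⟩ := hk; have := NeZero.ne k; omega)
  have hb : Even (b + 1).val ↔ ¬Even b.val := by
    rw [ZMod.val_add, ZMod.val_one_eq_one_mod, h1, Nat.even_iff,
      Nat.mod_mod_of_dvd _ (even_iff_two_dvd.mp hk), ← Nat.even_iff, Nat.even_add_one]
  rw [Nat.even_add, Nat.even_add, hb]
  tauto

lemma HoneyAdj.symm {x y : Vtx m n} (h : HoneyAdj m n x y) : HoneyAdj m n y x := by
  rcases h with ⟨h1, h2⟩ | ⟨h1, h2 | h2⟩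
  · exact .inl ⟨h1.symm, h2.symm⟩
  · exact .inr ⟨h1.symm, .inr h2⟩
  · exact .inr ⟨h1.symm, .inl h2⟩

lemma HoneyAdj.ne (hm : 2 ≤ m) (hn : 2 ≤ n) {x y : Vtx m n} (h : HoneyAdj m n x y) :
    x ≠ y := by
  rintro rfl
  rcases h with ⟨-, h | h⟩ | ⟨-, ⟨h, -⟩ | ⟨h, -⟩⟩
  · exact add_one_ne_self hm _ h.symm
  · exact add_one_ne_self hm _ h.symm
  · exact add_one_ne_self hn _ h.symm
  · exact add_one_ne_self hn _ h.symm

def vertNbr (x : Vtx m n) : Vtx m n :=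
  (x.1, if Even (x.1.val + x.2.val) then x.2 + 1 else x.2 - 1)

def honeyNbrs (x : Vtx m n) : Finset (Vtx m n) :=
  {(x.1 + 1, x.2), (x.1 - 1, x.2), vertNbr x}

lemma card_honeyNbrs (hm : 3 ≤ m) (x : Vtx m n) : (honeyNbrs x).card = 3 := by
  refine Finset.card_eq_three.mpr ⟨_, _, _, ?_, ?_, ?_, rfl⟩ <;>
    simp only [vertNbr, ne_eq, Prod.mk.injEq, not_and]
  · exact fun h => absurd h (add_one_ne_sub_one hm _)
  · exact fun h => absurd h (add_one_ne_self (by omega) _)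
  · exact fun h => absurd h (sub_one_ne_self (by omega) _)

lemma honeyAdj_iff_mem_honeyNbrs [NeZero n] (hn : Even n) {x y : Vtx m n} :
    HoneyAdj m n x y ↔ y ∈ honeyNbrs x := by
  simp only [honeyNbrs, vertNbr, Finset.mem_insert, Finset.mem_singleton, HoneyAdj,
    Prod.ext_iff]
  have hpar := even_val_add_val_add_one hn x.1
  constructor
  · rintro (⟨h2, h1 | h1⟩ | ⟨h1, ⟨h2, hxy⟩ | ⟨h2, hxy⟩⟩)
    · exact .inl ⟨h1, h2.symm⟩
    · exact .inr (.inl ⟨by rw [h1]; ring, h2.symm⟩)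
    · exact .inr (.inr ⟨h1.symm, by rw [if_pos hxy, h2]⟩)
    · have hx : ¬Even (x.1.val + x.2.val) := by rw [h2, hpar, h1]; exact not_not.mpr hxy
      exact .inr (.inr ⟨h1.symm, by rw [if_neg hx, h2]; ring⟩)
  · rintro (⟨h1, h2⟩ | ⟨h1, h2⟩ | ⟨h1, h2⟩)
    · exact .inl ⟨h2.symm, .inl h1⟩
    · exact .inl ⟨h2.symm, .inr (by rw [h1]; ring)⟩
    · split_ifs at h2 with hx
      · exact .inr ⟨h1.symm, .inl ⟨h2, hx⟩⟩
      · refine .inr ⟨h1.symm, .inr ⟨by rw [h2]; ring, ?_⟩⟩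
        have h := hpar (x.2 - 1)
        rw [sub_add_cancel] at h
        rw [h1, h2]
        tauto

lemma bdeg_insert {A : Finset (Sym2 (Vtx m n))} {e : Sym2 (Vtx m n)} (he : e ∉ A)
    (x : Vtx m n) : bdeg m n (insert e A) x = bdeg m n A x + if x ∈ e then 1 else 0 := by
  unfold bdeg
  rw [Finset.filter_insert]
  split_ifs with hx
  · exact Finset.card_insert_of_notMem fun h => he (Finset.mem_filter.mp h).1
  · rfl

lemma bdeg_erase_add {A : Finset (Sym2 (Vtx m n))} {e : Sym2 (Vtx m n)} (he : e ∈ A)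
    (x : Vtx m n) : bdeg m n (A.erase e) x + (if x ∈ e then 1 else 0) = bdeg m n A x := by
  conv_rhs => rw [← Finset.insert_erase he]
  rw [bdeg_insert (Finset.notMem_erase e A)]

lemma odd_bdeg_insert {A : Finset (Sym2 (Vtx m n))} {e : Sym2 (Vtx m n)} (he : e ∉ A)
    (x : Vtx m n) : Odd (bdeg m n (insert e A) x) ↔ ¬(Odd (bdeg m n A x) ↔ x ∈ e) := by
  rw [bdeg_insert he]
  split_ifs with hx <;> simp [Nat.odd_add_one, hx]

lemma odd_bdeg_erase {A : Finset (Sym2 (Vtx m n))} {e : Sym2 (Vtx m n)} (he : e ∈ A)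
    (x : Vtx m n) : Odd (bdeg m n (A.erase e) x) ↔ ¬(Odd (bdeg m n A x) ↔ x ∈ e) := by
  rw [← bdeg_erase_add he]
  split_ifs with hx <;> simp [Nat.odd_add_one, hx]

variable [NeZero m] [NeZero n]

lemma mem_honeyEdges {x y : Vtx m n} (h : HoneyAdj m n x y) : s(x, y) ∈ honeyEdges m n :=
  Finset.mem_image.mpr ⟨(x, y), Finset.mem_filter.mpr ⟨Finset.mem_univ _, h⟩, rfl⟩

lemma filter_mem_subset_image_honeyNbrs (hn : Even n) {A : Finset (Sym2 (Vtx m n))}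
    (hA : A ⊆ honeyEdges m n) (x : Vtx m n) :
    A.filter (x ∈ ·) ⊆ (honeyNbrs x).image (s(x, ·)) := by
  intro e he
  obtain ⟨heA, hxe⟩ := Finset.mem_filter.mp he
  obtain ⟨⟨a, b⟩, hab, rfl⟩ := Finset.mem_image.mp (hA heA)
  replace hab : HoneyAdj m n a b := (Finset.mem_filter.mp hab).2
  rw [Finset.mem_image]
  rcases Sym2.mem_iff.mp hxe with rfl | rfl
  · exact ⟨b, (honeyAdj_iff_mem_honeyNbrs hn).mp hab, rfl⟩
  · exact ⟨a, (honeyAdj_iff_mem_honeyNbrs hn).mp hab.symm, Sym2.eq_swap⟩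

lemma bdeg_le_three (hn : Even n) {A : Finset (Sym2 (Vtx m n))} (hA : A ⊆ honeyEdges m n)
    (x : Vtx m n) : bdeg m n A x ≤ 3 :=
  calc bdeg m n A x ≤ ((honeyNbrs x).image (s(x, ·))).card :=
        Finset.card_le_card (filter_mem_subset_image_honeyNbrs hn hA x)
    _ ≤ (honeyNbrs x).card := Finset.card_image_le
    _ ≤ 3 := Finset.card_le_three

lemma exists_honeyAdj_notMem_of_bdeg_lt_three (hm : 3 ≤ m) (hn : Even n)
    {A : Finset (Sym2 (Vtx m n))} {x : Vtx m n} (hx : bdeg m n A x < 3) :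
    ∃ y, HoneyAdj m n x y ∧ s(x, y) ∉ A := by
  by_contra! h
  have hsub : (honeyNbrs x).image (s(x, ·)) ⊆ A.filter (x ∈ ·) := by
    rintro _ he
    obtain ⟨y, hy, rfl⟩ := Finset.mem_image.mp he
    exact Finset.mem_filter.mpr
      ⟨h y ((honeyAdj_iff_mem_honeyNbrs hn).mpr hy), Sym2.mem_mk_left _ _⟩
  have hcard := Finset.card_le_card hsub
  rw [Finset.card_image_of_injective _ fun _ _ => Sym2.congr_right.mp, card_honeyNbrs hm] at hcard
  exact absurd hx (not_lt.mpr hcard)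

section WormState

variable {A : Finset (Sym2 (Vtx m n))} {u v u' : Vtx m n}

lemma IsWormState.swap (h : IsWormState m n A u v) : IsWormState m n A v u :=
  ⟨h.1, fun x => (h.2 x).trans (by grind)⟩

lemma IsWormState.of_odd_bdeg_iff {B : Finset (Sym2 (Vtx m n))} (h : IsWormState m n A u v)
    (hB : B ⊆ honeyEdges m n) (hu : u ≠ u')
    (hpar : ∀ x, Odd (bdeg m n B x) ↔ ¬(Odd (bdeg m n A x) ↔ x ∈ s(u, u'))) :
    IsWormState m n B u' v := by
  refine ⟨hB, fun x => ?_⟩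
  rw [hpar, h.2, Sym2.mem_iff]
  grind

lemma IsWormState.insert_fst (h : IsWormState m n A u v) (hadj : HoneyAdj m n u u')
    (hu : u ≠ u') (he : s(u, u') ∉ A) : IsWormState m n (insert s(u, u') A) u' v :=
  h.of_odd_bdeg_iff (Finset.insert_subset (mem_honeyEdges hadj) h.1) hu (odd_bdeg_insert he)

lemma IsWormState.erase_fst (h : IsWormState m n A u v) (hu : u ≠ u') (he : s(u, u') ∈ A) :
    IsWormState m n (A.erase s(u, u')) u' v :=
  h.of_odd_bdeg_iff ((Finset.erase_subset _ _).trans h.1) hu (odd_bdeg_erase he)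

end WormState

lemma pinf_nonneg (s t : WormState m n) : 0 ≤ Pinf m n s t := by
  unfold Pinf
  split_ifs <;> positivity

lemma pinf_pow_nonneg (k : ℕ) (s t : WormState m n) : 0 ≤ (Pinf m n ^ k) s t := by
  induction k generalizing t with
  | zero => rw [pow_zero, Matrix.one_apply]; positivity
  | succ k ih =>
    rw [pow_succ, Matrix.mul_apply]
    exact Finset.sum_nonneg fun r _ => mul_nonneg (ih r) (pinf_nonneg r t)

lemma Reaches.of_pinf_pos {s t : WormState m n} (h : 0 < Pinf m n s t) : Reaches m n s t :=
  ⟨1, by rwa [pow_one]⟩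

lemma Reaches.trans {s t r : WormState m n} (hst : Reaches m n s t) (htr : Reaches m n t r) :
    Reaches m n s r := by
  obtain ⟨j, hj⟩ := hst
  obtain ⟨k, hk⟩ := htr
  refine ⟨j + k, ?_⟩
  rw [pow_add, Matrix.mul_apply]
  exact (mul_pos hj hk).trans_le (Finset.single_le_sum
    (fun q _ => mul_nonneg (pinf_pow_nonneg j s q) (pinf_pow_nonneg k q r)) (Finset.mem_univ t))

section Transitions

variable {A : Finset (Sym2 (Vtx m n))} {u v w : Vtx m n} {t : WormState m n}

lemma pinf_pos_insert_of_eq (hs : IsWormState m n A v v) (hadj : HoneyAdj m n v w)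
    (he : s(v, w) ∉ A) (ht : t.1.1 = insert s(v, w) A)
    (hends : t.1.2 = (w, v) ∨ t.1.2 = (v, w)) :
    0 < Pinf m n ⟨(A, v, v), hs⟩ t := by
  obtain ⟨⟨B, u', v'⟩, hB⟩ := t
  simp only [Prod.mk.injEq] at ht hends
  have hc : ∃ x, HoneyAdj m n v x ∧ s(v, x) ∉ A ∧ B = insert s(v, x) A ∧
      (u' = x ∧ v' = v ∨ u' = v ∧ v' = x) := ⟨w, hadj, he, ht, hends⟩
  simp only [Pinf, if_true, if_pos hc]
  positivity

lemma pinf_pos_erase_fst (hs : IsWormState m n A u v) (huv : u ≠ v) (hu : bdeg m n A u = 3)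
    (hadj : HoneyAdj m n u w) (he : s(u, w) ∈ A) (ht : t.1 = (A.erase s(u, w), w, v)) :
    0 < Pinf m n ⟨(A, u, v), hs⟩ t := by
  obtain ⟨⟨B, u', v'⟩, hB⟩ := t
  simp only [Prod.mk.injEq] at ht
  have hc : bdeg m n A u = 3 ∧ ∃ x, HoneyAdj m n u x ∧ s(u, x) ∈ A ∧
      B = A.erase s(u, x) ∧ u' = x ∧ v' = v := ⟨hu, w, hadj, he, ht⟩
  simp only [Pinf, if_neg huv, if_pos hc]
  positivity

lemma pinf_pos_insert_fst (hs : IsWormState m n A u v) (huv : u ≠ v) (hu : bdeg m n A u = 1)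
    (hadj : HoneyAdj m n u w) (he : s(u, w) ∉ A) (ht : t.1 = (insert s(u, w) A, w, v)) :
    0 < Pinf m n ⟨(A, u, v), hs⟩ t := by
  obtain ⟨⟨B, u', v'⟩, hB⟩ := t
  simp only [Prod.mk.injEq] at ht
  have hc : bdeg m n A u = 1 ∧ ∃ x, HoneyAdj m n u x ∧ s(u, x) ∉ A ∧
      B = insert s(u, x) A ∧ u' = x ∧ v' = v := ⟨hu, w, hadj, he, ht⟩
  simp only [Pinf, if_neg huv, if_pos hc]
  positivity

lemma pinf_pos_erase_snd (hs : IsWormState m n A u v) (huv : u ≠ v) (hv : bdeg m n A v = 3)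
    (hadj : HoneyAdj m n v w) (he : s(v, w) ∈ A) (ht : t.1 = (A.erase s(v, w), u, w)) :
    0 < Pinf m n ⟨(A, u, v), hs⟩ t := by
  obtain ⟨⟨B, u', v'⟩, hB⟩ := t
  simp only [Prod.mk.injEq] at ht
  have hc : bdeg m n A v = 3 ∧ ∃ x, HoneyAdj m n v x ∧ s(v, x) ∈ A ∧
      B = A.erase s(v, x) ∧ u' = u ∧ v' = x := ⟨hv, w, hadj, he, ht⟩
  simp only [Pinf, if_neg huv, if_pos hc]
  positivity

end Transitions

section Paths

variable {A : Finset (Sym2 (Vtx m n))} {u v : Vtx m n}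

lemma IsWormState.bdeg_eq_two (hn : Even n) (hs : IsWormState m n A v v)
    (hA : ∀ x, bdeg m n A x ≠ 0) (x : Vtx m n) : bdeg m n A x = 2 := by
  have h3 := bdeg_le_three hn hs.1 x
  obtain ⟨k, hk⟩ := Nat.not_odd_iff_even.mp fun h => ((hs.2 x).mp h).2 rfl
  have := hA x
  omega

lemma exists_comm_insert (hs : IsWormState m n A v v) (hadj : HoneyAdj m n u v) (huv : u ≠ v)
    (hu : bdeg m n A u = 2) (he : s(u, v) ∉ A) :
    ∃ t : WormState m n, t.1 = (insert s(u, v) A, u, v) ∧ Comm m n ⟨(A, v, v), hs⟩ t := by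
  have hvu : s(v, u) = s(u, v) := Sym2.eq_swap
  have ht : IsWormState m n (insert s(u, v) A) u v := by
    simpa only [hvu] using hs.insert_fst hadj.symm huv.symm (hvu ▸ he)
  refine ⟨⟨_, ht⟩, rfl, .of_pinf_pos ?_, .of_pinf_pos ?_⟩
  · exact pinf_pos_insert_of_eq hs hadj.symm (hvu ▸ he) (by rw [hvu]) (.inl rfl)
  · refine pinf_pos_erase_fst ht huv ?_ hadj (Finset.mem_insert_self _ _) ?_
    · rw [bdeg_insert he, hu, if_pos (Sym2.mem_mk_left u v)]
    · simp [Finset.erase_insert he]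

lemma exists_comm_erase (hm : 3 ≤ m) (hn : Even n) (hn2 : 2 ≤ n) (hs : IsWormState m n A v v)
    (hadj : HoneyAdj m n u v) (hdeg : ∀ x, bdeg m n A x = 2) (he : s(u, v) ∈ A) :
    ∃ t : WormState m n, t.1 = (A.erase s(u, v), u, v) ∧ Comm m n ⟨(A, v, v), hs⟩ t := by
  obtain ⟨w, hvw, hw⟩ :=
    exists_honeyAdj_notMem_of_bdeg_lt_three hm hn (A := A) (x := v) (by rw [hdeg v]; omega)
  have hvu : s(v, u) = s(u, v) := Sym2.eq_swap
  have huv : u ≠ v := hadj.ne (by omega) hn2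
  have hvw_ne : v ≠ w := hvw.ne (by omega) hn2
  have huw : u ≠ w := by rintro rfl; exact hw (hvu ▸ he)
  set B := insert s(v, w) A with hB
  have hvuB : s(v, u) ∈ B := Finset.mem_insert_of_mem (hvu ▸ he)
  have h1 : IsWormState m n B v w := (hs.insert_fst hvw hvw_ne hw).swap
  have h2 : IsWormState m n (B.erase s(v, u)) u w := h1.erase_fst huv.symm hvuB
  have ht : IsWormState m n (A.erase s(u, v)) u v := by
    simpa only [hvu] using hs.erase_fst huv.symm (hvu ▸ he)
  have hBv : bdeg m n B v = 3 := by rw [bdeg_insert hw, hdeg v, if_pos (Sym2.mem_mk_left v w)]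
  have hBw : bdeg m n (B.erase s(v, u)) w = 3 := by
    have h := bdeg_erase_add hvuB w
    rw [bdeg_insert hw, hdeg w, if_pos (Sym2.mem_mk_right v w),
      if_neg (by simp [Sym2.mem_iff, hvw_ne.symm, huw.symm])] at h
    omega
  have hAu : bdeg m n (A.erase s(u, v)) u = 1 := by
    have h := bdeg_erase_add he u
    rw [hdeg u, if_pos (Sym2.mem_mk_left u v)] at h
    omega
  have hwvB : s(w, v) ∈ B.erase s(v, u) := by
    rw [Sym2.eq_swap (a := w), Finset.mem_erase, Ne, Sym2.congr_right]
    exact ⟨huw.symm, Finset.mem_insert_self _ _⟩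
  have hBA : (B.erase s(v, u)).erase s(w, v) = A.erase s(u, v) := by
    rw [Sym2.eq_swap (a := w), Finset.erase_right_comm, hB, Finset.erase_insert hw, hvu]
  refine ⟨⟨_, ht⟩, rfl, ?_, .of_pinf_pos ?_⟩
  · have step1 := pinf_pos_insert_of_eq hs hvw hw (t := ⟨(B, v, w), h1⟩) rfl (.inr rfl)
    have step2 := pinf_pos_erase_fst h1 hvw_ne hBv hadj.symm hvuB
      (t := ⟨(B.erase s(v, u), u, w), h2⟩) rfl
    have step3 := pinf_pos_erase_snd h2 huw hBw hvw.symm hwvB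
      (t := ⟨(A.erase s(u, v), u, v), ht⟩) (by rw [hBA])
    exact (Reaches.of_pinf_pos step1).trans
      ((Reaches.of_pinf_pos step2).trans (Reaches.of_pinf_pos step3))
  · exact pinf_pos_insert_fst ht huv hAu hadj (Finset.notMem_erase _ _)
      (by simp [Finset.insert_erase he])

end Paths

theorem quasi_eulerian_general (m n : ℕ) [NeZero m] [NeZero n]
    (hn : Even n) (hm4 : 4 ≤ m) (hn4 : 4 ≤ n)
    (st : WormState m n) (v : Vtx m n) (hst : st.1.2 = (v, v))
    (hR : FullSupport m n st) (u : Vtx m n) (hadj : HoneyAdj m n u v) :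
    ∃ t1 : WormState m n,
      t1.1 = ((if s(u, v) ∈ st.1.1 then st.1.1.erase s(u, v) else insert s(u, v) st.1.1), u, v) ∧
      Comm m n st t1 := by
  obtain ⟨⟨A, q⟩, hs⟩ := st
  obtain rfl : q = (v, v) := hst
  have hdeg := hs.bdeg_eq_two hn hR
  by_cases he : s(u, v) ∈ A
  · simpa only [if_pos he] using exists_comm_erase (by omega) hn (by omega) hs hadj hdeg he
  · simpa only [if_neg he] using
      exists_comm_insert hs hadj (hadj.ne (by omega) (by omega)) (hdeg u) he

theorem quasi_eulerian (m n : ℕ) [NeZero m] [NeZero n]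
    (hm : Even m) (hn : Even n) (hm4 : 4 ≤ m) (hn4 : 4 ≤ n)
    (st : WormState m n) (v : Vtx m n) (hst : st.1.2 = (v, v))
    (hR : FullSupport m n st) (u : Vtx m n) (hadj : HoneyAdj m n u v) :
    ∃ t1 : WormState m n,
      t1.1 = ((if s(u, v) ∈ st.1.1 then st.1.1.erase s(u, v) else insert s(u, v) st.1.1), u, v) ∧
      Comm m n st t1 :=
  quasi_eulerian_general m n hn hm4 hn4 st v hst hR u hadj

end FPL
end

section
/- (Edge conservation lemma) Let (A,u,v) ∈ ℛ and let j ∈ ℤ/nℤ be such that neither u nor v lies in row j. Define H_j as the number of vacant horizontal edges of row j (edges (i,j)(i+1,j) ∉ A), U_j as the number of occupied up-pointing vertical edges of row j (edges (i,j)(i,j+1) ∈ A with i+j even), and D_j as the number of occupied down-pointing vertical edges of row j (edges (i,j)(i,j−1) ∈ A with i+j odd). Then H_j = U_j = D_j. -/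
attribute [local instance] Classical.propDecidable

namespace FPL

variable (m n : ℕ) [NeZero m] [NeZero n]

/-! In a row avoiding both endpoints every vertex has even, nonzero degree, hence degree exactly
two. So the vertical edge at `(i, j)` is occupied iff one of the two horizontal edges at `(i, j)` is
vacant, and these two are never both vacant: the indicator of the vertical edge is the
sum of the two vacancy indicators. Up- and down-pointing vertices alternate along the row, so
summing over either kind counts every vacant horizontal edge exactly once. -/

lemma sum_filter_sub_add_eq_sum {G M : Type*} [AddGroup G] [Fintype G] [AddCommMonoid M]
    {P : G → Prop} [DecidablePred P] {c : G} (hP : ∀ i, P (i + c) ↔ ¬ P i) (f : G → M) :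
    ∑ i ∈ Finset.univ.filter P, (f (i - c) + f i) = ∑ i, f i := by
  have hshift :
      ∑ i ∈ Finset.univ.filter P, f (i - c) = ∑ i ∈ Finset.univ.filter (¬ P ·), f i :=
    Finset.sum_nbij' (· - c) (· + c)
      (fun i hi => by simpa [← hP (i - c)] using hi)
      (fun i hi => by simpa [hP i] using hi)
      (fun i _ => sub_add_cancel i c) (fun i _ => add_sub_cancel_right i c) (fun _ _ => rfl)
  rw [Finset.sum_add_distrib, hshift, add_comm, Finset.sum_filter_add_sum_filter_not]

lemma ne_one_of_even {k : ℕ} (hk : Even k) : k ≠ 1 :=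
  fun h => Nat.not_even_one (h ▸ hk)

lemma even_val_add_one_iff {k : ℕ} [NeZero k] (hk : Even k) (i : ZMod k) :
    Even (i + 1).val ↔ ¬ Even i.val := by
  rw [ZMod.val_add, ZMod.val_one'' (ne_one_of_even hk), Nat.even_iff,
    Nat.mod_mod_of_dvd _ hk.two_dvd, ← Nat.even_iff, Nat.even_add_one]

section Lattice

variable {m n : ℕ}

def hEdge (i : ZMod m) (j : ZMod n) : Sym2 (Vtx m n) := s((i, j), (i + 1, j))

def vEdge (i : ZMod m) (j : ZMod n) : Sym2 (Vtx m n) :=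
  if Even (i.val + j.val) then s((i, j), (i, j + 1)) else s((i, j), (i, j - 1))

variable [NeZero m] [NeZero n]

lemma eq_hEdge_or_vEdge_of_mem (hn : Even n) {e : Sym2 (Vtx m n)} (he : e ∈ honeyEdges m n)
    {i : ZMod m} {j : ZMod n} (hx : ((i, j) : Vtx m n) ∈ e) :
    e = hEdge (i - 1) j ∨ e = hEdge i j ∨ e = vEdge i j := by
  have hdown (a : ZMod m) (b : ZMod n) :
      Even (a.val + b.val) → ¬ Even (a.val + (b + 1).val) := by
    simp only [Nat.even_add, even_val_add_one_iff hn]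
    tauto
  simp only [honeyEdges, Finset.mem_image, Finset.mem_filter, Finset.mem_univ, true_and] at he
  obtain ⟨⟨⟨a1, a2⟩, ⟨b1, b2⟩⟩, hadj, rfl⟩ := he
  simp only [Sym2.mem_iff, Prod.mk.injEq] at hx
  simp only [HoneyAdj] at hadj
  rcases hx with ⟨rfl, rfl⟩ | ⟨rfl, rfl⟩ <;>
    rcases hadj with ⟨rfl, rfl | rfl⟩ | ⟨rfl, ⟨rfl, hpar⟩ | ⟨rfl, hpar⟩⟩
  all_goals first
    | simp [hEdge, vEdge, hpar, hdown _ _ hpar, Sym2.eq_swap]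
    | simp [hEdge, vEdge, Sym2.eq_swap]

lemma bdeg_eq_sum_incident (hm : 2 < m) (hn : Even n) {A : Finset (Sym2 (Vtx m n))}
    (hA : A ⊆ honeyEdges m n) (i : ZMod m) (j : ZMod n) :
    bdeg m n A (i, j) = (if hEdge (i - 1) j ∈ A then 1 else 0) + (if hEdge i j ∈ A then 1 else 0)
      + (if vEdge i j ∈ A then 1 else 0) := by
  have h2 : (2 : ZMod m) ≠ 0 := fun h => by simpa [h] using ZMod.val_ofNat_of_lt (a := 2) hm
  have h1 : (1 : ZMod n) ≠ 0 :=
    haveI := ZMod.nontrivial_iff.2 (ne_one_of_even hn)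
    one_ne_zero
  have hj : j ≠ j - 1 := fun h => h1 (by linear_combination h)
  have hlr : hEdge (i - 1) j ≠ hEdge i j := by
    simp only [hEdge, sub_add_cancel, ne_eq, Sym2.eq_iff, Prod.mk.injEq, and_true]
    rintro (⟨-, h⟩ | h)
    · exact h2 (by linear_combination -2 * h)
    · exact h2 (by linear_combination -h)
  have hlv : hEdge (i - 1) j ≠ vEdge i j := by
    unfold hEdge vEdge; split_ifs <;> simp [h1, hj]
  have hrv : hEdge i j ≠ vEdge i j := by
    unfold hEdge vEdge; split_ifs <;> simp [h1, hj]
  have hinc : A.filter (fun e => ((i, j) : Vtx m n) ∈ e)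
      = ({hEdge (i - 1) j, hEdge i j, vEdge i j} : Finset _).filter (· ∈ A) := by
    ext e
    simp only [Finset.mem_filter, Finset.mem_insert, Finset.mem_singleton]
    constructor
    · rintro ⟨he, hx⟩
      exact ⟨eq_hEdge_or_vEdge_of_mem hn (hA he) hx, he⟩
    · rintro ⟨h | h | h, he⟩ <;> subst h <;> refine ⟨he, ?_⟩
      · simp [hEdge]
      · simp [hEdge]
      · unfold vEdge; split_ifs <;> simp
  rw [bdeg, hinc, Finset.card_filter, Finset.sum_insert (by simp [hlr, hlv]),
    Finset.sum_insert (by simp [hrv]), Finset.sum_singleton, add_assoc]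

lemma ite_vEdge_mem_eq_of_even (hm : 2 < m) (hn : Even n) {A : Finset (Sym2 (Vtx m n))}
    (hA : A ⊆ honeyEdges m n) {i : ZMod m} {j : ZMod n} (heven : Even (bdeg m n A (i, j)))
    (hpos : bdeg m n A (i, j) ≠ 0) :
    (if vEdge i j ∈ A then 1 else 0)
      = (if hEdge (i - 1) j ∈ A then 0 else 1) + (if hEdge i j ∈ A then 0 else 1) := by
  rw [bdeg_eq_sum_incident hm hn hA] at heven hpos
  rw [Nat.even_iff] at heven
  split_ifs at heven hpos ⊢ <;> omega

lemma card_vertical_mem_eq_card_hEdge_not_mem (hm : 2 < m) (hn : Even n)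
    {A : Finset (Sym2 (Vtx m n))} (hA : A ⊆ honeyEdges m n) {j : ZMod n}
    (hrow : ∀ i : ZMod m, Even (bdeg m n A (i, j)) ∧ bdeg m n A (i, j) ≠ 0)
    {P : ZMod m → Prop} [DecidablePred P] (hP : ∀ i, P (i + 1) ↔ ¬ P i)
    {e : ZMod m → Sym2 (Vtx m n)} (he : ∀ i, P i → vEdge i j = e i) :
    (Finset.univ.filter fun i => P i ∧ e i ∈ A).card
      = (Finset.univ.filter fun i => hEdge i j ∉ A).card := by
  rw [← Finset.filter_filter, Finset.card_filter, Finset.card_filter]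
  calc ∑ i ∈ Finset.univ.filter P, (if e i ∈ A then 1 else 0)
      = ∑ i ∈ Finset.univ.filter P,
          ((if hEdge (i - 1) j ∈ A then 0 else 1) + (if hEdge i j ∈ A then 0 else 1)) :=
        Finset.sum_congr rfl fun i hi => by
          rw [← he i (Finset.mem_filter.1 hi).2]
          exact ite_vEdge_mem_eq_of_even hm hn hA (hrow i).1 (hrow i).2
    _ = ∑ i, (if hEdge i j ∈ A then 0 else 1) :=
      sum_filter_sub_add_eq_sum hP fun i => if hEdge i j ∈ A then 0 else 1
    _ = ∑ i, (if hEdge i j ∉ A then 1 else 0) := by simp only [ite_not]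

end Lattice

theorem edge_conservation_general (m n : ℕ) [NeZero m] [NeZero n]
    (hm : Even m) (hn : Even n) (hm4 : 4 ≤ m)
    (st : WormState m n) (hR : FullSupport m n st)
    (j : ZMod n) (hu : st.1.2.1.2 ≠ j) (hv : st.1.2.2.2 ≠ j) :
    (Finset.univ.filter fun i : ZMod m => s(((i, j) : Vtx m n), ((i + 1, j) : Vtx m n)) ∉ st.1.1).card
        = (Finset.univ.filter fun i : ZMod m =>
            Even (i.val + j.val) ∧ s(((i, j) : Vtx m n), ((i, j + 1) : Vtx m n)) ∈ st.1.1).card ∧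
    (Finset.univ.filter fun i : ZMod m =>
            Even (i.val + j.val) ∧ s(((i, j) : Vtx m n), ((i, j + 1) : Vtx m n)) ∈ st.1.1).card
        = (Finset.univ.filter fun i : ZMod m =>
            ¬ Even (i.val + j.val) ∧ s(((i, j) : Vtx m n), ((i, j - 1) : Vtx m n)) ∈ st.1.1).card := by
  obtain ⟨⟨A, u, v⟩, hA, hodd⟩ := st
  have hrow (i : ZMod m) : Even (bdeg m n A (i, j)) ∧ bdeg m n A (i, j) ≠ 0 := by
    refine ⟨Nat.not_odd_iff_even.1 fun h => ?_, hR (i, j)⟩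
    rcases ((hodd (i, j)).1 h).1 with rfl | rfl
    exacts [hu rfl, hv rfl]
  have hflip (i : ZMod m) : Even ((i + 1).val + j.val) ↔ ¬ Even (i.val + j.val) := by
    simp only [Nat.even_add, even_val_add_one_iff hm]
    tauto
  have hU := card_vertical_mem_eq_card_hEdge_not_mem (by omega) hn hA hrow hflip
    (e := fun i => s(((i, j) : Vtx m n), ((i, j + 1) : Vtx m n))) fun i h => if_pos h
  have hD := card_vertical_mem_eq_card_hEdge_not_mem (by omega) hn hA hrow
    (fun i => not_congr (hflip i))
    (e := fun i => s(((i, j) : Vtx m n), ((i, j - 1) : Vtx m n))) fun i h => if_neg h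
  exact ⟨hU.symm, hU.trans hD.symm⟩

theorem edge_conservation (m n : ℕ) [NeZero m] [NeZero n]
    (hm : Even m) (hn : Even n) (hm4 : 4 ≤ m) (hn4 : 4 ≤ n)
    (st : WormState m n) (hR : FullSupport m n st)
    (j : ZMod n) (hu : st.1.2.1.2 ≠ j) (hv : st.1.2.2.2 ≠ j) :
    (Finset.univ.filter fun i : ZMod m => s(((i, j) : Vtx m n), ((i + 1, j) : Vtx m n)) ∉ st.1.1).card
        = (Finset.univ.filter fun i : ZMod m =>
            Even (i.val + j.val) ∧ s(((i, j) : Vtx m n), ((i, j + 1) : Vtx m n)) ∈ st.1.1).card ∧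
    (Finset.univ.filter fun i : ZMod m =>
            Even (i.val + j.val) ∧ s(((i, j) : Vtx m n), ((i, j + 1) : Vtx m n)) ∈ st.1.1).card
        = (Finset.univ.filter fun i : ZMod m =>
            ¬ Even (i.val + j.val) ∧ s(((i, j) : Vtx m n), ((i, j - 1) : Vtx m n)) ∈ st.1.1).card :=
  edge_conservation_general m n hm hn hm4 st hR j hu hv

end FPL
end
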